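/- Let (Ω, F, P) be a probability space, G ⊆ F a sub-σ-algebra, and U, V : Ω → ℝ^d integrable random vectors such that U is G-measurable, U V^T is integrable, |U| ≤ d₀ almost surely for some d₀ < ∞ (L¹ norm), and | E[V | G] − E[V] | ≤ b almost surely for some b < ∞. Then | E[U V^T] − E[U] (E[V])^T | ≤ d₀ b, where the left-hand side is the L¹ norm (sum of absolute values of entries) of the d×d covariance matrix Cov(U,V). -/

import Mathlib

/-!
Write `D = E[V | G] - E[V]`. Since `U` is bounded and `G`-measurable, the pull-out property gives
`E[U_i V_j] = E[U_i E[V_j | G]]`, so each covariance entry is `E[U_i D_j]`. Summing the absolute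
values of the entries, `Σ_{i,j} |E[U_i D_j]| ≤ E[Σ_{i,j} |U_i| |D_j|] = E[|U| |D|] ≤ d₀ b`.
-/

open MeasureTheory Real

noncomputable section

/-- L¹ norm of a vector in ℝ^n. -/
def l1 {n : ℕ} (v : Fin n → ℝ) : ℝ := ∑ i, |v i|

/-- L¹ norm of a square matrix (sum of absolute values of entries). -/
def l1m {n : ℕ} (A : Matrix (Fin n) (Fin n) ℝ) : ℝ := ∑ i, ∑ j, |A i j|

lemma abs_le_l1 {n : ℕ} (v : Fin n → ℝ) (i : Fin n) : |v i| ≤ l1 v :=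
  Finset.single_le_sum (f := fun k => |v k|) (fun _ _ => abs_nonneg _) (Finset.mem_univ i)

lemma l1_nonneg {n : ℕ} (v : Fin n → ℝ) : 0 ≤ l1 v :=
  Finset.sum_nonneg fun _ _ => abs_nonneg _

lemma l1_mul_l1 {n : ℕ} (u v : Fin n → ℝ) : l1 u * l1 v = ∑ i, ∑ j, |u i * v j| := by
  simp only [l1, Finset.sum_mul_sum, abs_mul]

section

variable {Ω : Type*} {m mΩ : MeasurableSpace Ω} {μ : Measure Ω}

lemma condExp_eval {n : ℕ} {V : Ω → Fin n → ℝ} (hV : Integrable V μ) (j : Fin n) :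
    (fun ω => μ[V|m] ω j) =ᵐ[μ] μ[fun ω => V ω j|m] :=
  (ContinuousLinearMap.proj j).comp_condExp_comm hV

lemma integral_mul_sub_integral_mul_integral_eq_integral_mul_condExp_sub [IsFiniteMeasure μ]
    (hm : m ≤ mΩ) {f g : Ω → ℝ} {c : ℝ} (hf : AEStronglyMeasurable[m] f μ)
    (hf_bound : ∀ᵐ ω ∂μ, ‖f ω‖ ≤ c) (hg : Integrable g μ) :
    (∫ ω, f ω * g ω ∂μ) - (∫ ω, f ω ∂μ) * (∫ ω, g ω ∂μ)
      = ∫ ω, f ω * (μ[g|m] ω - ∫ ω', g ω' ∂μ) ∂μ := by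
  have hf' : AEStronglyMeasurable f μ := hf.mono hm
  have hpull : ∫ ω, f ω * g ω ∂μ = ∫ ω, f ω * μ[g|m] ω ∂μ := by
    rw [← integral_condExp hm]
    exact integral_congr_ae (condExp_stronglyMeasurable_mul_of_bound₀ hm hf hg c hf_bound)
  rw [hpull, ← integral_mul_const, ← integral_sub (integrable_condExp.bdd_mul hf' hf_bound)
    ((Integrable.of_bound hf' c hf_bound).mul_const _)]
  simp only [mul_sub]

lemma sum_sum_abs_integral_mul_le [IsProbabilityMeasure μ] {n : ℕ} {u v : Ω → Fin n → ℝ}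
    {a b : ℝ} (huv : ∀ i j, Integrable (fun ω => u ω i * v ω j) μ)
    (hu : ∀ᵐ ω ∂μ, l1 (u ω) ≤ a) (hv : ∀ᵐ ω ∂μ, l1 (v ω) ≤ b) :
    ∑ i, ∑ j, |∫ ω, u ω i * v ω j ∂μ| ≤ a * b := by
  have habs_int : ∀ i, ∀ j ∈ Finset.univ, Integrable (fun ω => |u ω i * v ω j|) μ :=
    fun i j _ => (huv i j).abs
  have hprod_int : Integrable (fun ω => l1 (u ω) * l1 (v ω)) μ := by
    simp only [l1_mul_l1]
    exact integrable_finsetSum _ fun i _ => integrable_finsetSum _ (habs_int i)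
  have hprod_le : ∀ᵐ ω ∂μ, l1 (u ω) * l1 (v ω) ≤ a * b := by
    filter_upwards [hu, hv] with ω hu hv
    exact mul_le_mul hu hv (l1_nonneg _) ((l1_nonneg _).trans hu)
  calc ∑ i, ∑ j, |∫ ω, u ω i * v ω j ∂μ|
      ≤ ∑ i, ∑ j, ∫ ω, |u ω i * v ω j| ∂μ :=
        Finset.sum_le_sum fun i _ => Finset.sum_le_sum fun j _ => abs_integral_le_integral_abs
    _ = ∫ ω, l1 (u ω) * l1 (v ω) ∂μ := by
        simp only [l1_mul_l1]
        rw [integral_finsetSum _ fun i _ => integrable_finsetSum _ (habs_int i)]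
        exact Finset.sum_congr rfl fun i _ => (integral_finsetSum _ (habs_int i)).symm
    _ ≤ ∫ _ω, a * b ∂μ := integral_mono_ae hprod_int (integrable_const _) hprod_le
    _ = a * b := by simp

end

theorem stmt_12_general {Ω : Type*} [m0 : MeasurableSpace Ω] (μ : Measure Ω)
    [IsProbabilityMeasure μ] {d : ℕ}
    (G : MeasurableSpace Ω) (hG : G ≤ m0)
    (U V : Ω → Fin d → ℝ)
    (hU_meas : StronglyMeasurable[G] U)
    (hV_int : Integrable V μ)
    (d0 b : ℝ)
    (hU_bd : ∀ᵐ ω ∂μ, l1 (U ω) ≤ d0)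
    (hcond : ∀ᵐ ω ∂μ, l1 ((μ[V|G]) ω - ∫ ω', V ω' ∂μ) ≤ b) :
    l1m (Matrix.of fun i j : Fin d =>
          (∫ ω, U ω i * V ω j ∂μ) - (∫ ω, U ω i ∂μ) * (∫ ω, V ω j ∂μ))
      ≤ d0 * b := by
  set D : Ω → Fin d → ℝ := fun ω => μ[V|G] ω - ∫ ω', V ω' ∂μ
  have hUi_meas : ∀ i, StronglyMeasurable[G] (fun ω => U ω i) := fun i =>
    (continuous_apply i).comp_stronglyMeasurable hU_meas
  have hUi_bd : ∀ i, ∀ᵐ ω ∂μ, ‖U ω i‖ ≤ d0 := fun i =>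
    hU_bd.mono fun ω h => (abs_le_l1 (U ω) i).trans h
  have hentry : ∀ i j, (∫ ω, U ω i * V ω j ∂μ) - (∫ ω, U ω i ∂μ) * (∫ ω, V ω j ∂μ)
      = ∫ ω, U ω i * D ω j ∂μ := by
    intro i j
    rw [integral_mul_sub_integral_mul_integral_eq_integral_mul_condExp_sub hG
      (hUi_meas i).aestronglyMeasurable (hUi_bd i) (hV_int.eval j)]
    refine integral_congr_ae ?_
    filter_upwards [condExp_eval (m := G) hV_int j] with ω hω
    simp only [D, Pi.sub_apply, hω, eval_integral hV_int.eval j]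
  have hUD_int : ∀ i j, Integrable (fun ω => U ω i * D ω j) μ := fun i j =>
    ((integrable_condExp.sub (integrable_const _)).eval j).bdd_mul
      ((hUi_meas i).mono hG).aestronglyMeasurable (hUi_bd i)
  simp only [l1m, Matrix.of_apply, hentry]
  exact sum_sum_abs_integral_mul_le hUD_int hU_bd hcond

/-- Covariance contraction step: if `U` is `G`-measurable with `|U| ≤ d₀` a.s. and
`|E[V|G] − E[V]| ≤ b` a.s., then `|E[UVᵀ] − E[U]E[V]ᵀ| ≤ d₀ b`. -/
theorem stmt_12 {Ω : Type*} [m0 : MeasurableSpace Ω] (μ : Measure Ω)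
    [IsProbabilityMeasure μ] {d : ℕ}
    (G : MeasurableSpace Ω) (hG : G ≤ m0)
    (U V : Ω → Fin d → ℝ)
    (hU_meas : StronglyMeasurable[G] U)
    (hU_int : Integrable U μ) (hV_int : Integrable V μ)
    (hUV_int : ∀ i j, Integrable (fun ω => U ω i * V ω j) μ)
    (d0 b : ℝ)
    (hU_bd : ∀ᵐ ω ∂μ, l1 (U ω) ≤ d0)
    (hcond : ∀ᵐ ω ∂μ, l1 ((μ[V|G]) ω - ∫ ω', V ω' ∂μ) ≤ b) :
    l1m (Matrix.of fun i j : Fin d =>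
          (∫ ω, U ω i * V ω j ∂μ) - (∫ ω, U ω i ∂μ) * (∫ ω, V ω j ∂μ))
      ≤ d0 * b :=
  stmt_12_general (m0 := m0) μ G hG U V hU_meas hV_int d0 b hU_bd hcond
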